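/- arXiv:2512.24972 — 2 statements merged into one kernel-verified Lean document; each statement's English description precedes it below -/
import Mathlib

section
/- Let $0<\eta<1$ and let $\mathcal{S}$ be an $\eta$-sparse family of dyadic cubes contained in $[0,1]^n$, decomposed into layers $\mathcal{S}^{(0)}, \mathcal{S}^{(1)}, \dots$ where $\mathcal{S}^{(0)}=\{[0,1]^n\}$ and $\mathcal{S}^{(j+1)}$ consists of the maximal cubes of $\mathcal{S}\setminus(\mathcal{S}^{(0)}\cup\cdots\cup\mathcal{S}^{(j)})$. Then for every $j\ge 0$, $\sum_{Q\in \mathcal{S}^{(j)}} |Q| \le C (1-\eta)^j$ for a constant $C$ depending only on $\eta$. -/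
/-!
Write `a j` for the total volume of the `j`-th layer and `T j = ∑_{k ≥ j} a k` for the tail.
The sets `E Q` of the cubes in layers `≥ j` are pairwise disjoint and all lie in the union of
layer `j`, so sparseness gives `η T j ≤ a j`. Since `T j = a j + T (j + 1)`, this is the decay
`T (j + 1) ≤ (1 - η) T j`, and `a 0 = 1` bounds `T 0` by `1 / η`. Hence
`a j ≤ T j ≤ (1 - η) ^ j / η`.
-/

open MeasureTheory
open scoped ENNReal

namespace ENNReal

theorem tsum_nat_add_succ_le_of_mul_le {a : ℕ → ℝ≥0∞} {c : ℝ≥0∞} {j : ℕ}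
    (hT : ∑' k, a (j + k) ≠ ∞) (h : c * ∑' k, a (j + k) ≤ a j) :
    ∑' k, a (j + 1 + k) ≤ (1 - c) * ∑' k, a (j + k) := by
  have hsplit : ∑' k, a (j + k) = a j + ∑' k, a (j + 1 + k) := by
    rw [tsum_eq_zero_add' ENNReal.summable]
    simp only [add_zero]
    exact congrArg _ (tsum_congr fun k => congrArg a (by omega))
  have hcT : c * ∑' k, a (j + k) ≠ ∞ :=
    ne_top_of_le_ne_top hT (h.trans (hsplit ▸ le_self_add))
  rw [ENNReal.sub_mul fun _ _ => hT, one_mul]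
  refine ENNReal.le_sub_of_add_le_right hcT ?_
  calc ∑' k, a (j + 1 + k) + c * ∑' k, a (j + k)
      ≤ ∑' k, a (j + 1 + k) + a j := by gcongr
    _ = ∑' k, a (j + k) := by rw [hsplit, add_comm]

theorem tsum_nat_add_le_geometric {a : ℕ → ℝ≥0∞} {c : ℝ≥0∞} (hc : c ≠ 0) (ha0 : a 0 ≠ ∞)
    (h : ∀ j, c * ∑' k, a (j + k) ≤ a j) (j : ℕ) :
    ∑' k, a (j + k) ≤ (1 - c) ^ j * (a 0 / c) := by
  induction j with
  | zero =>
    rw [pow_zero, one_mul, ENNReal.le_div_iff_mul_le (Or.inl hc) (Or.inr ha0), mul_comm]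
    simpa using h 0
  | succ j ih =>
    have hfin : ∑' k, a (j + k) ≠ ∞ :=
      ne_top_of_le_ne_top (mul_ne_top (pow_ne_top (by simp)) (div_ne_top ha0 hc)) ih
    calc ∑' k, a (j + 1 + k) ≤ (1 - c) * ∑' k, a (j + k) :=
          tsum_nat_add_succ_le_of_mul_le hfin (h j)
      _ ≤ (1 - c) * ((1 - c) ^ j * (a 0 / c)) := mul_le_mul_right ih _
      _ = (1 - c) ^ (j + 1) * (a 0 / c) := by rw [pow_succ', mul_assoc]

end ENNReal

namespace SparseLayers

variable {α : Type*} {S : ℕ → Set (Set α)}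

theorem exists_ssubset_of_lt (hsub : ∀ j, ∀ Q ∈ S (j + 1), ∃ R ∈ S j, Q ⊂ R)
    {i j : ℕ} (hij : i < j) {Q : Set α} (hQ : Q ∈ S j) : ∃ R ∈ S i, Q ⊂ R := by
  induction j, hij using Nat.le_induction generalizing Q with
  | base => exact hsub i Q hQ
  | succ j _ ih =>
    obtain ⟨R, hR, hQR⟩ := hsub j Q hQ
    obtain ⟨R', hR', hRR'⟩ := ih hR
    exact ⟨R', hR', hQR.trans hRR'⟩

theorem exists_subset_mem_zero (hsub : ∀ j, ∀ Q ∈ S (j + 1), ∃ R ∈ S j, Q ⊂ R)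
    {k : ℕ} {Q : Set α} (hQ : Q ∈ S k) : ∃ R ∈ S 0, Q ⊆ R := by
  rcases k.eq_zero_or_pos with rfl | hk
  · exact ⟨Q, hQ, subset_rfl⟩
  · obtain ⟨R, hR, hQR⟩ := exists_ssubset_of_lt hsub hk hQ
    exact ⟨R, hR, hQR.subset⟩

/-- A set occurring in two different layers is disjoint from its strict ancestor, hence empty. -/
theorem eq_empty_of_mem_of_lt (hsub : ∀ j, ∀ Q ∈ S (j + 1), ∃ R ∈ S j, Q ⊂ R)
    (hdisj : ∀ j, (S j).Pairwise fun Q R => Disjoint Q R)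
    {i j : ℕ} (hij : i < j) {Q : Set α} (hQi : Q ∈ S i) (hQj : Q ∈ S j) : Q = ∅ := by
  obtain ⟨R, hR, hQR⟩ := exists_ssubset_of_lt hsub hij hQj
  exact (hdisj i hQi hR hQR.ne).eq_bot_of_le hQR.subset

theorem pairwise_disjoint_sigma (hsub : ∀ j, ∀ Q ∈ S (j + 1), ∃ R ∈ S j, Q ⊂ R)
    (hdisj : ∀ j, (S j).Pairwise fun Q R => Disjoint Q R) {E : Set α → Set α}
    (hEsub : ∀ k, ∀ Q ∈ S k, E Q ⊆ Q)
    (hEdisj : ∀ k l, ∀ Q ∈ S k, ∀ R ∈ S l, Q ≠ R → Disjoint (E Q) (E R)) :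
    Pairwise (Function.onFun Disjoint fun p : (Σ k, S k) => E p.2) := by
  rintro ⟨k, Q, hQ⟩ ⟨l, R, hR⟩ hne
  by_cases hQR : Q = R
  · subst hQR
    have hkl : k ≠ l := by rintro rfl; exact hne rfl
    have hempty : Q = ∅ := by
      rcases hkl.lt_or_gt with h | h
      · exact eq_empty_of_mem_of_lt hsub hdisj h hQ hR
      · exact eq_empty_of_mem_of_lt hsub hdisj h hR hQ
    simp [Function.onFun, Set.subset_empty_iff.1 ((hEsub k Q hQ).trans hempty.subset)]
  · exact hEdisj k l Q hQ R hR hQR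

theorem mul_tsum_le_measure_sUnion_zero [MeasurableSpace α] (μ : Measure α) {c : ℝ≥0∞}
    (hsub : ∀ j, ∀ Q ∈ S (j + 1), ∃ R ∈ S j, Q ⊂ R)
    (hdisj : ∀ j, (S j).Pairwise fun Q R => Disjoint Q R) (hcount : ∀ j, (S j).Countable)
    {E : Set α → Set α}
    (hE : ∀ k, ∀ Q ∈ S k, E Q ⊆ Q ∧ MeasurableSet (E Q) ∧ c * μ Q ≤ μ (E Q))
    (hEdisj : ∀ k l, ∀ Q ∈ S k, ∀ R ∈ S l, Q ≠ R → Disjoint (E Q) (E R)) :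
    c * ∑' k, ∑' Q : S k, μ Q ≤ μ (⋃₀ S 0) := by
  have : ∀ k, Countable (S k) := fun k => (hcount k).to_subtype
  calc c * ∑' k, ∑' Q : S k, μ Q = ∑' p : Σ k, S k, c * μ p.2 := by
        simp only [← ENNReal.tsum_mul_left, ENNReal.tsum_sigma']
    _ ≤ ∑' p : Σ k, S k, μ (E p.2) :=
        ENNReal.tsum_le_tsum fun p => (hE p.1 p.2 p.2.2).2.2
    _ = μ (⋃ p : Σ k, S k, E p.2) :=
        (measure_iUnion (pairwise_disjoint_sigma hsub hdisj (fun k Q hQ => (hE k Q hQ).1) hEdisj)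
          fun p => (hE p.1 p.2 p.2.2).2.1).symm
    _ ≤ μ (⋃₀ S 0) := by
        refine measure_mono (Set.iUnion_subset fun p => ?_)
        obtain ⟨R, hR, hpR⟩ := exists_subset_mem_zero hsub p.2.2
        exact ((hE p.1 p.2 p.2.2).1.trans hpR).trans (Set.subset_sUnion_of_mem hR)

end SparseLayers

open SparseLayers in
theorem stmt_3_general (n : ℕ) (η : ℝ) (hη0 : 0 < η) (hη1 : η < 1)
    (S : ℕ → Set (Set (Fin n → ℝ)))
    (hcount : ∀ j, (S j).Countable)
    (hmeas : ∀ j, ∀ Q ∈ S j, MeasurableSet Q)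
    (h0 : S 0 = {Set.Icc (0 : Fin n → ℝ) 1})
    (hsub : ∀ j, ∀ Q ∈ S (j + 1), ∃ R ∈ S j, Q ⊆ R ∧ Q ≠ R)
    (hdisj : ∀ j, (S j).Pairwise fun Q R => Disjoint Q R)
    (E : Set (Fin n → ℝ) → Set (Fin n → ℝ))
    (hE : ∀ Q ∈ ⋃ j, S j, E Q ⊆ Q ∧ MeasurableSet (E Q) ∧
      ENNReal.ofReal η * volume Q ≤ volume (E Q))
    (hEdisj : ∀ Q ∈ ⋃ j, S j, ∀ R ∈ ⋃ j, S j, Q ≠ R → Disjoint (E Q) (E R)) :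
    ∃ C > 0, ∀ j : ℕ,
      ∑' Q : S j, volume (Q : Set (Fin n → ℝ)) ≤ ENNReal.ofReal (C * (1 - η) ^ j) := by
  set a : ℕ → ℝ≥0∞ := fun j => ∑' Q : S j, volume (Q : Set (Fin n → ℝ))
  have hssub : ∀ j, ∀ Q ∈ S (j + 1), ∃ R ∈ S j, Q ⊂ R := fun j Q hQ => by
    obtain ⟨R, hR, hQR, hne⟩ := hsub j Q hQ
    exact ⟨R, hR, hQR.ssubset_of_ne hne⟩
  have hmem : ∀ {j Q}, Q ∈ S j → Q ∈ ⋃ i, S i := fun hQ => Set.mem_iUnion.2 ⟨_, hQ⟩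
  have htail : ∀ j, ENNReal.ofReal η * ∑' k, a (j + k) ≤ a j := fun j => by
    simp only [a]
    rw [← measure_sUnion (hcount j) (hdisj j) (hmeas j)]
    exact mul_tsum_le_measure_sUnion_zero (S := fun k => S (j + k)) volume
      (fun k => by simpa only [Nat.add_assoc] using hssub (j + k)) (fun k => hdisj _)
      (fun k => hcount _) (fun k Q hQ => hE Q (hmem hQ))
      (fun k l Q hQ R hR => hEdisj Q (hmem hQ) R (hmem hR))
  have ha0 : a 0 = 1 := by
    simp only [a]
    rw [← measure_sUnion (hcount 0) (hdisj 0) (hmeas 0), h0, Set.sUnion_singleton,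
      Real.volume_Icc_pi]
    simp
  refine ⟨η⁻¹, inv_pos.2 hη0, fun j => ?_⟩
  calc a j ≤ ∑' k, a (j + k) := by simpa using ENNReal.le_tsum (f := fun k => a (j + k)) 0
    _ ≤ (1 - ENNReal.ofReal η) ^ j * (a 0 / ENNReal.ofReal η) :=
        ENNReal.tsum_nat_add_le_geometric (by simpa using hη0) (by simp [ha0]) htail j
    _ = ENNReal.ofReal (η⁻¹ * (1 - η) ^ j) := by
        rw [ha0, ENNReal.ofReal_mul (inv_nonneg.2 hη0.le), ENNReal.ofReal_pow (by linarith),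
          ENNReal.ofReal_sub _ hη0.le, ENNReal.ofReal_one, ENNReal.ofReal_inv_of_pos hη0,
          one_div, mul_comm]

/-- for an `η`-sparse family of dyadic cubes in `[0,1]^n`, organized into
layers `S 0, S 1, …` where `S 0 = {[0,1]^n}`, each layer (for `j ≥ 1`) consists of
pairwise disjoint cubes, and every cube of layer `j+1` is strictly contained in a cube
of layer `j`, the total volume of the `j`-th layer decays like `(1-η)^j`. -/
theorem stmt_3 (n : ℕ) (hn : 1 ≤ n) (η : ℝ) (hη0 : 0 < η) (hη1 : η < 1)
    (S : ℕ → Set (Set (Fin n → ℝ)))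
    (hcount : ∀ j, (S j).Countable)
    (hmeas : ∀ j, ∀ Q ∈ S j, MeasurableSet Q)
    (h0 : S 0 = {Set.Icc (0 : Fin n → ℝ) 1})
    (hsub : ∀ j, ∀ Q ∈ S (j + 1), ∃ R ∈ S j, Q ⊆ R ∧ Q ≠ R)
    (hdisj : ∀ j, (S j).Pairwise fun Q R => Disjoint Q R)
    (E : Set (Fin n → ℝ) → Set (Fin n → ℝ))
    (hE : ∀ Q ∈ ⋃ j, S j, E Q ⊆ Q ∧ MeasurableSet (E Q) ∧
      ENNReal.ofReal η * volume Q ≤ volume (E Q))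
    (hEdisj : ∀ Q ∈ ⋃ j, S j, ∀ R ∈ ⋃ j, S j, Q ≠ R → Disjoint (E Q) (E R)) :
    ∃ C > 0, ∀ j : ℕ,
      ∑' Q : S j, volume (Q : Set (Fin n → ℝ)) ≤ ENNReal.ofReal (C * (1 - η) ^ j) :=
  stmt_3_general n η hη0 hη1 S hcount hmeas h0 hsub hdisj E hE hEdisj
end

section
/- Let $1<t<3/2$, $n=1$ setting on the disc: for every $1\le p,q\le\infty$ with $\frac1q-\frac1p>2t-2$, the operator $T f(z)=\sum_{j\ge0} A_j f(z)$, where $A_j f(z)=\sum_{|I|=2^{-j}}\mathbf{1}_{Q_I}(z)|Q_I|^{-t}\int_{Q_I}|f|\,dA$ over a dyadic system on the circle, is bounded from $L^p(\mathbb{D})$ to $L^q(\mathbb{D})$. Specifically, with the bounds $\|A_j\|_{L^p\to L^q}\le C 2^{j(2(t-1)+\frac{p-q}{pq}\log_2(1/2))}$ one has geometric summability whenever $2(t-1) < \frac1q-\frac1p$. -/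
/-!
On a box `Q` Hölder's inequality gives `|Q|^{-t} ∫_Q |f| ≤ |Q|^{1 - 1/p - t} ‖f‖_{L^p(Q)}`, and
since the boxes of one generation are disjoint, `‖A_j f‖_q^q = ∑_Q |Q| (|Q|^{-t} ∫_Q |f|)^q`.
Hölder once more, for the finite sum over the `2^j` boxes of measure `≍ 4^{-j}` (this is where
`q < p` enters), yields `‖A_j f‖_q ≤ C 2^{j(2t - 2 + 1/p - 1/q)} ‖f‖_p`. Off the critical line
the exponent is negative, so Minkowski's inequality for the series `T = ∑_j A_j` and a geometric
sum conclude.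
-/

open MeasureTheory ENNReal NNReal Filter Topology Function

theorem comp_sum_indicator_of_pairwise_disjoint {X ι M N : Type*} [Fintype ι]
    [AddCommMonoid M] [AddCommMonoid N] {Q : ι → Set X} (hQ : Pairwise (Disjoint on Q))
    {g : M → N} (hg : g 0 = 0) (a : ι → M) (x : X) :
    g (∑ i, (Q i).indicator (fun _ => a i) x) = ∑ i, (Q i).indicator (fun _ => g (a i)) x := by
  by_cases hx : ∃ i, x ∈ Q i
  · obtain ⟨i, hi⟩ := hx
    have hother : ∀ j ≠ i, x ∉ Q j := fun j hj hxj => (hQ hj).le_bot ⟨hxj, hi⟩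
    rw [Fintype.sum_eq_single i fun j hj => Set.indicator_of_notMem (hother j hj) _,
      Fintype.sum_eq_single i fun j hj => Set.indicator_of_notMem (hother j hj) _,
      Set.indicator_of_mem hi, Set.indicator_of_mem hi]
  · simp only [not_exists] at hx
    simp [Set.indicator_of_notMem (hx _), hg]

namespace ENNReal

theorem rpow_le_add_mul_rpow_of_mem_Icc {a b V v : ℝ≥0∞} (ha : a ≠ 0) (hV : V ≠ 0)
    (hv : v ∈ Set.Icc (a * V) (b * V)) (s : ℝ) : v ^ s ≤ (a ^ s + b ^ s) * V ^ s := by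
  rw [add_mul]
  rcases le_or_gt 0 s with hs | hs
  · rw [← mul_rpow_of_nonneg _ _ hs, ← mul_rpow_of_nonneg _ _ hs]
    exact (rpow_le_rpow hv.2 hs).trans le_add_self
  · rw [← mul_rpow_of_ne_zero ha hV]
    have hanti : (v ^ (-s))⁻¹ ≤ ((a * V) ^ (-s))⁻¹ :=
      ENNReal.inv_le_inv.mpr (rpow_le_rpow hv.1 (neg_nonneg.mpr hs.le))
    rw [← rpow_neg, ← rpow_neg, neg_neg] at hanti
    exact hanti.trans le_self_add

theorem toReal_inv_add_lt {p q : ℝ≥0∞} {b : ℝ} (hq0 : q ≠ 0)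
    (h : p⁻¹ + ENNReal.ofReal b < q⁻¹) : p.toReal⁻¹ + b < q.toReal⁻¹ := by
  have hqinv : q⁻¹ ≠ ⊤ := ENNReal.inv_ne_top.mpr hq0
  have hpinv : p⁻¹ ≠ ⊤ := ne_top_of_lt (le_self_add.trans_lt h)
  have hlt := (toReal_lt_toReal (add_ne_top.mpr ⟨hpinv, ofReal_ne_top⟩) hqinv).mpr h
  rw [toReal_add hpinv ofReal_ne_top, toReal_inv, toReal_inv, toReal_ofReal'] at hlt
  linarith [le_max_left b 0]

end ENNReal

namespace MeasureTheory

variable {X : Type*} [MeasurableSpace X] {μ : Measure X}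

theorem eLpNorm_rpow_toReal_eq_lintegral {E : Type*} [NormedAddCommGroup E] {f : X → E}
    {p : ℝ≥0∞} (hp0 : p ≠ 0) (hptop : p ≠ ⊤) :
    eLpNorm f p μ ^ p.toReal = ∫⁻ x, ‖f x‖ₑ ^ p.toReal ∂μ := by
  rw [eLpNorm_eq_eLpNorm' hp0 hptop,
    ← lintegral_rpow_enorm_eq_rpow_eLpNorm' (ENNReal.toReal_pos hp0 hptop)]

theorem eLpNorm_tsum_le {E : Type*} [NormedAddCommGroup E] [CompleteSpace E] {p : ℝ≥0∞}
    (hp : 1 ≤ p) {f : ℕ → X → E} (hf : ∀ n, AEStronglyMeasurable (f n) μ) :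
    eLpNorm (fun x => ∑' n, f n x) p μ ≤ ∑' n, eLpNorm (f n) p μ := by
  by_cases hfin : ∑' n, eLpNorm (f n) p μ = ⊤
  · simp [hfin]
  have h_lim : ∀ᵐ x ∂μ, Tendsto (fun N => (∑ n ∈ Finset.range N, f n) x) atTop
      (𝓝 (∑' n, f n x)) := by
    filter_upwards [summable_norm_of_tsum_eLpNorm_ne_top hp hf hfin] with x hx
    simpa only [Finset.sum_apply] using hx.of_norm.tendsto_sum_tsum_nat
  refine (Lp.eLpNorm_lim_le_liminf_eLpNorm
    (fun N => Finset.aestronglyMeasurable_sum _ fun n _ => hf n) _ h_lim).trans ?_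
  refine liminf_le_of_frequently_le' (Frequently.of_forall fun N => ?_)
  exact (eLpNorm_sum_le (fun n _ => hf n) hp).trans (ENNReal.sum_le_tsum _)

theorem eLpNorm_tsum_le_of_le_geometric {E : Type*} [NormedAddCommGroup E] [CompleteSpace E]
    {p : ℝ≥0∞} (hp : 1 ≤ p) {f : ℕ → X → E} (hf : ∀ n, AEStronglyMeasurable (f n) μ)
    {K ρ L : ℝ≥0∞} (hfn : ∀ n, eLpNorm (f n) p μ ≤ K * ρ ^ n * L) :
    eLpNorm (fun x => ∑' n, f n x) p μ ≤ K * (1 - ρ)⁻¹ * L :=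
  calc eLpNorm (fun x => ∑' n, f n x) p μ ≤ ∑' n, K * ρ ^ n * L :=
        (eLpNorm_tsum_le hp hf).trans (ENNReal.tsum_le_tsum hfn)
    _ = K * (1 - ρ)⁻¹ * L := by
        rw [ENNReal.tsum_mul_right, ENNReal.tsum_mul_left, ENNReal.tsum_geometric]

theorem enorm_setIntegral_abs_le {s : Set X} {p : ℝ≥0∞} (hp : 1 ≤ p) {f : X → ℝ}
    (hf : AEStronglyMeasurable f (μ.restrict s)) :
    ‖∫ w in s, |f w| ∂μ‖ₑ ≤ eLpNorm f p (μ.restrict s) * μ s ^ (1 - p.toReal⁻¹) :=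
  calc ‖∫ w in s, |f w| ∂μ‖ₑ ≤ ∫⁻ w in s, ‖f w‖ₑ ∂μ := by
        simpa only [Real.enorm_abs] using enorm_integral_le_lintegral_enorm (fun w => |f w|)
    _ = eLpNorm f 1 (μ.restrict s) := eLpNorm_one_eq_lintegral_enorm.symm
    _ ≤ eLpNorm f p (μ.restrict s) * μ s ^ (1 - p.toReal⁻¹) := by
        simpa using eLpNorm_le_eLpNorm_mul_rpow_measure_univ hp hf

noncomputable def boxCoefficient (μ : Measure X) (s : Set X) (t : ℝ) (f : X → ℝ) : ℝ :=
  (μ s).toReal ^ (-t) * ∫ w in s, |f w| ∂μ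

theorem enorm_boxCoefficient_mul_rpow_le {s : Set X} (hs0 : μ s ≠ 0) (hstop : μ s ≠ ⊤)
    {p : ℝ≥0∞} (hp : 1 ≤ p) (q t : ℝ) {f : X → ℝ} (hf : AEStronglyMeasurable f (μ.restrict s)) :
    ‖boxCoefficient μ s t f‖ₑ * μ s ^ q
      ≤ μ s ^ (q + 1 - p.toReal⁻¹ - t) * eLpNorm f p (μ.restrict s) := by
  have hmeas : ‖(μ s).toReal ^ (-t)‖ₑ = μ s ^ (-t) := by
    rw [Real.enorm_eq_ofReal (by positivity),
      ← ENNReal.ofReal_rpow_of_pos (ENNReal.toReal_pos hs0 hstop), ENNReal.ofReal_toReal hstop]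
  calc ‖boxCoefficient μ s t f‖ₑ * μ s ^ q
      ≤ μ s ^ (-t) * (eLpNorm f p (μ.restrict s) * μ s ^ (1 - p.toReal⁻¹)) * μ s ^ q := by
        rw [boxCoefficient, enorm_mul, hmeas]
        gcongr
        exact enorm_setIntegral_abs_le hp hf
    _ = μ s ^ (q + 1 - p.toReal⁻¹ - t) * eLpNorm f p (μ.restrict s) := by
        rw [show q + 1 - p.toReal⁻¹ - t = -t + (1 - p.toReal⁻¹) + q by ring,
          ENNReal.rpow_add _ _ hs0 hstop, ENNReal.rpow_add _ _ hs0 hstop]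
        ring

section BoxFamily

variable {ι : Type*} [Fintype ι] {Q : ι → Set X}

theorem eLpNorm_sum_indicator_const_rpow {E : Type*} [NormedAddCommGroup E]
    (hQm : ∀ i, MeasurableSet (Q i)) (hQ : Pairwise (Disjoint on Q)) (a : ι → E)
    {q : ℝ≥0∞} (hq0 : q ≠ 0) (hqtop : q ≠ ⊤) :
    eLpNorm (fun x => ∑ i, (Q i).indicator (fun _ => a i) x) q μ ^ q.toReal
      = ∑ i, ‖a i‖ₑ ^ q.toReal * μ (Q i) := by
  have hq : 0 < q.toReal := ENNReal.toReal_pos hq0 hqtop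
  rw [eLpNorm_rpow_toReal_eq_lintegral hq0 hqtop]
  simp_rw [comp_sum_indicator_of_pairwise_disjoint hQ (g := fun y : E => ‖y‖ₑ ^ q.toReal)
    (by simp [ENNReal.zero_rpow_of_pos hq]) a]
  rw [lintegral_finsetSum _ fun i _ => measurable_const.indicator (hQm i)]
  simp_rw [lintegral_indicator_const (hQm _)]

theorem sum_eLpNorm_restrict_rpow_le {E : Type*} [NormedAddCommGroup E]
    (hQm : ∀ i, MeasurableSet (Q i)) (hQ : Pairwise (Disjoint on Q)) (f : X → E)
    {p : ℝ≥0∞} (hp0 : p ≠ 0) (hptop : p ≠ ⊤) :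
    ∑ i, eLpNorm f p (μ.restrict (Q i)) ^ p.toReal ≤ eLpNorm f p μ ^ p.toReal := by
  simp_rw [eLpNorm_rpow_toReal_eq_lintegral hp0 hptop]
  rw [← tsum_fintype (L := SummationFilter.unconditional _), ← lintegral_iUnion hQm hQ]
  exact setLIntegral_le_lintegral _ _

/- For `p = ∞` the exponent of the cardinality is `1`, because `(∞ : ℝ≥0∞).toReal⁻¹ = 0`. -/
theorem sum_eLpNorm_restrict_rpow_le_card_rpow_mul {E : Type*} [NormedAddCommGroup E]
    (hQm : ∀ i, MeasurableSet (Q i)) (hQ : Pairwise (Disjoint on Q)) (f : X → E)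
    {p q : ℝ≥0∞} (hq0 : q ≠ 0) (hqtop : q ≠ ⊤) (hqp : q ≤ p) :
    ∑ i, eLpNorm f p (μ.restrict (Q i)) ^ q.toReal
      ≤ (Fintype.card ι : ℝ≥0∞) ^ (1 - q.toReal * p.toReal⁻¹) * eLpNorm f p μ ^ q.toReal := by
  have hq : 0 < q.toReal := ENNReal.toReal_pos hq0 hqtop
  by_cases hptop : p = ⊤
  · subst hptop
    calc ∑ i, eLpNorm f ⊤ (μ.restrict (Q i)) ^ q.toReal
        ≤ ∑ _i : ι, eLpNorm f ⊤ μ ^ q.toReal :=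
          Finset.sum_le_sum fun i _ => ENNReal.rpow_le_rpow
            (eLpNorm_mono_measure f Measure.restrict_le_self) hq.le
      _ = _ := by simp
  have hp0 : p ≠ 0 := ne_bot_of_le_ne_bot hq0 hqp
  have hp : 0 < p.toReal := ENNReal.toReal_pos hp0 hptop
  set r := p.toReal / q.toReal with hr_def
  have hr : 1 ≤ r := (one_le_div hq).mpr (ENNReal.toReal_mono hptop hqp)
  have hqr : q.toReal * r = p.toReal := by rw [hr_def]; field_simp
  have hpow : (∑ i, eLpNorm f p (μ.restrict (Q i)) ^ q.toReal) ^ r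
      ≤ (Fintype.card ι : ℝ≥0∞) ^ (r - 1) * eLpNorm f p μ ^ p.toReal := by
    refine (ENNReal.rpow_sum_le_const_mul_sum_rpow Finset.univ _ hr).trans ?_
    simp_rw [← ENNReal.rpow_mul, hqr, Finset.card_univ]
    gcongr
    exact sum_eLpNorm_restrict_rpow_le hQm hQ f hp0 hptop
  calc ∑ i, eLpNorm f p (μ.restrict (Q i)) ^ q.toReal
      ≤ ((Fintype.card ι : ℝ≥0∞) ^ (r - 1) * eLpNorm f p μ ^ p.toReal) ^ r⁻¹ :=
        (ENNReal.le_rpow_inv_iff (by positivity)).mpr (by simpa using hpow)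
    _ = _ := by
        rw [ENNReal.mul_rpow_of_nonneg _ _ (by positivity), ← ENNReal.rpow_mul,
          ← ENNReal.rpow_mul]
        congr 2 <;> rw [hr_def] <;> field_simp

/-- The layer `A_j` of the paper, for an arbitrary finite family of boxes `Q`. -/
noncomputable def hypersingularLayer (μ : Measure X) (Q : ι → Set X) (t : ℝ) (f : X → ℝ)
    (z : X) : ℝ :=
  ∑ i, (Q i).indicator (fun _ => boxCoefficient μ (Q i) t f) z

theorem hypersingularLayer_restrict_of_subset {D : Set X} (hQD : ∀ i, Q i ⊆ D) (t : ℝ)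
    (f : X → ℝ) : hypersingularLayer (μ.restrict D) Q t f = hypersingularLayer μ Q t f := by
  funext z
  simp only [hypersingularLayer, boxCoefficient, Measure.restrict_eq_self _ (hQD _),
    Measure.restrict_restrict_of_subset (hQD _)]

theorem measurable_hypersingularLayer (hQm : ∀ i, MeasurableSet (Q i)) (t : ℝ) (f : X → ℝ) :
    Measurable (hypersingularLayer μ Q t f) :=
  Finset.measurable_sum _ fun i _ => measurable_const.indicator (hQm i)

theorem eLpNorm_hypersingularLayer_le (hQm : ∀ i, MeasurableSet (Q i))
    (hQ : Pairwise (Disjoint on Q)) (hQ0 : ∀ i, μ (Q i) ≠ 0) (hQtop : ∀ i, μ (Q i) ≠ ⊤)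
    {p q : ℝ≥0∞} (hp : 1 ≤ p) (hq0 : q ≠ 0) (hqtop : q ≠ ⊤) (hqp : q ≤ p) {t : ℝ}
    {M : ℝ≥0∞} (hM : ∀ i, μ (Q i) ^ (q.toReal⁻¹ + 1 - p.toReal⁻¹ - t) ≤ M) {f : X → ℝ}
    (hf : AEStronglyMeasurable f μ) :
    eLpNorm (hypersingularLayer μ Q t f) q μ
      ≤ M * (Fintype.card ι : ℝ≥0∞) ^ (q.toReal⁻¹ - p.toReal⁻¹) * eLpNorm f p μ := by
  have hq : 0 < q.toReal := ENNReal.toReal_pos hq0 hqtop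
  rw [← ENNReal.rpow_le_rpow_iff hq]
  unfold hypersingularLayer
  rw [eLpNorm_sum_indicator_const_rpow hQm hQ _ hq0 hqtop]
  calc ∑ i, ‖boxCoefficient μ (Q i) t f‖ₑ ^ q.toReal * μ (Q i)
      = ∑ i, (‖boxCoefficient μ (Q i) t f‖ₑ * μ (Q i) ^ q.toReal⁻¹) ^ q.toReal := by
        simp_rw [ENNReal.mul_rpow_of_nonneg _ _ hq.le, ENNReal.rpow_inv_rpow hq.ne']
    _ ≤ ∑ i, (M * eLpNorm f p (μ.restrict (Q i))) ^ q.toReal := by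
        refine Finset.sum_le_sum fun i _ => ENNReal.rpow_le_rpow ?_ hq.le
        exact (enorm_boxCoefficient_mul_rpow_le (hQ0 i) (hQtop i) hp _ _ hf.restrict).trans
          (mul_le_mul_left (hM i) _)
    _ = M ^ q.toReal * ∑ i, eLpNorm f p (μ.restrict (Q i)) ^ q.toReal := by
        simp_rw [ENNReal.mul_rpow_of_nonneg _ _ hq.le, Finset.mul_sum]
    _ ≤ M ^ q.toReal * ((Fintype.card ι : ℝ≥0∞) ^ (1 - q.toReal * p.toReal⁻¹)
          * eLpNorm f p μ ^ q.toReal) := by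
        gcongr
        exact sum_eLpNorm_restrict_rpow_le_card_rpow_mul hQm hQ f hq0 hqtop hqp
    _ = (M * (Fintype.card ι : ℝ≥0∞) ^ (q.toReal⁻¹ - p.toReal⁻¹) * eLpNorm f p μ)
          ^ q.toReal := by
        rw [ENNReal.mul_rpow_of_nonneg _ _ hq.le, ENNReal.mul_rpow_of_nonneg _ _ hq.le,
          ← ENNReal.rpow_mul, mul_assoc]
        congr 3
        field_simp

end BoxFamily

theorem eLpNorm_hypersingularLayer_le_geometric {j : ℕ} {Q : Fin (2 ^ j) → Set X}
    (hQm : ∀ i, MeasurableSet (Q i)) (hQ : Pairwise (Disjoint on Q)) {c₁ c₂ : ℝ}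
    (hc₁ : 0 < c₁) (hvol : ∀ i, ENNReal.ofReal (c₁ * 2 ^ (-2 * (j : ℝ))) ≤ μ (Q i) ∧
      μ (Q i) ≤ ENNReal.ofReal (c₂ * 2 ^ (-2 * (j : ℝ))))
    {p q : ℝ≥0∞} (hp : 1 ≤ p) (hq0 : q ≠ 0) (hqtop : q ≠ ⊤) (hqp : q ≤ p) (t : ℝ)
    {f : X → ℝ} (hf : AEStronglyMeasurable f μ) :
    eLpNorm (hypersingularLayer μ Q t f) q μ
      ≤ (ENNReal.ofReal c₁ ^ (q.toReal⁻¹ + 1 - p.toReal⁻¹ - t)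
          + ENNReal.ofReal c₂ ^ (q.toReal⁻¹ + 1 - p.toReal⁻¹ - t))
        * ((2 : ℝ≥0∞) ^ (2 * t - 2 + p.toReal⁻¹ - q.toReal⁻¹)) ^ j * eLpNorm f p μ := by
  set s := q.toReal⁻¹ + 1 - p.toReal⁻¹ - t
  set V : ℝ≥0∞ := 2 ^ (-2 * (j : ℝ))
  have hV0 : V ≠ 0 := (ENNReal.rpow_pos two_pos ENNReal.ofNat_ne_top).ne'
  have hscale (c : ℝ) : ENNReal.ofReal (c * 2 ^ (-2 * (j : ℝ))) = ENNReal.ofReal c * V := by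
    rw [ENNReal.ofReal_mul' (by positivity), ← ENNReal.ofReal_rpow_of_pos two_pos,
      ENNReal.ofReal_ofNat]
  have hc₁' : ENNReal.ofReal c₁ ≠ 0 := (ENNReal.ofReal_pos.mpr hc₁).ne'
  have hQ0 (i) : μ (Q i) ≠ 0 :=
    ne_bot_of_le_ne_bot (by rw [hscale]; exact mul_ne_zero hc₁' hV0) (hvol i).1
  have hQtop (i) : μ (Q i) ≠ ⊤ := ne_top_of_le_ne_top ENNReal.ofReal_ne_top (hvol i).2
  refine (eLpNorm_hypersingularLayer_le hQm hQ hQ0 hQtop hp hq0 hqtop hqp (M := _ * V ^ s)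
    (fun i => ENNReal.rpow_le_add_mul_rpow_of_mem_Icc hc₁' hV0
      (by simpa only [hscale, Set.mem_Icc] using hvol i) s) hf).trans_eq ?_
  have hexp : V ^ s * ((2 ^ j : ℕ) : ℝ≥0∞) ^ (q.toReal⁻¹ - p.toReal⁻¹)
      = ((2 : ℝ≥0∞) ^ (2 * t - 2 + p.toReal⁻¹ - q.toReal⁻¹)) ^ j := by
    rw [Nat.cast_pow, Nat.cast_ofNat, ← ENNReal.rpow_natCast, ← ENNReal.rpow_mul,
      ← ENNReal.rpow_mul, ← ENNReal.rpow_mul_natCast,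
      ← ENNReal.rpow_add _ _ two_ne_zero ENNReal.ofNat_ne_top]
    congr 1
    simp only [s]
    ring
  rw [Fintype.card_fin, mul_assoc _ (V ^ s), hexp]

end MeasureTheory

theorem stmt_19_general (t : ℝ)
    (c₁ c₂ : ℝ) (hc₁ : 0 < c₁) (hc₂ : 0 < c₂)
    (p q : ℝ≥0∞) (hp : 1 ≤ p) (hq : 1 ≤ q)
    (hpq : 1 / p + ENNReal.ofReal (2 * t - 2) < 1 / q)
    (Q : (j : ℕ) → Fin (2 ^ j) → Set ℂ)
    (hmeas : ∀ (j : ℕ) (i : Fin (2 ^ j)), MeasurableSet (Q j i))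
    (hdisj : ∀ j, Pairwise fun i i' => Disjoint (Q j i) (Q j i'))
    (hvol : ∀ (j : ℕ) (i : Fin (2 ^ j)), ENNReal.ofReal (c₁ * 2 ^ (-2 * (j : ℝ))) ≤ volume (Q j i) ∧
      volume (Q j i) ≤ ENNReal.ofReal (c₂ * 2 ^ (-2 * (j : ℝ))))
    (hunion : ∀ j, (⋃ i, Q j i) = {z : ℂ | 1 - 2 ^ (-(j : ℝ)) ≤ ‖z‖ ∧ ‖z‖ < 1}) :
    ∃ C > 0, ∀ f : ℂ → ℝ,
      MemLp f p (volume.restrict {z : ℂ | ‖z‖ < 1}) →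
      eLpNorm
          (fun z => ∑' j : ℕ, ∑ i : Fin (2 ^ j),
            Set.indicator (Q j i)
              (fun _ => (volume (Q j i)).toReal ^ (-t) * ∫ w in Q j i, |f w|) z)
          q (volume.restrict {z : ℂ | ‖z‖ < 1})
        ≤ ENNReal.ofReal C * eLpNorm f p (volume.restrict {z : ℂ | ‖z‖ < 1}) := by
  set D := {z : ℂ | ‖z‖ < 1}
  have hq0 : q ≠ 0 := (zero_lt_one.trans_le hq).ne'
  have hqp : q < p :=
    ENNReal.inv_lt_inv.mp (by simpa only [one_div] using le_self_add.trans_lt hpq)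
  set ρ : ℝ≥0∞ := 2 ^ (2 * t - 2 + p.toReal⁻¹ - q.toReal⁻¹)
  have hρ : ρ < 1 := ENNReal.rpow_lt_one_of_one_lt_of_neg one_lt_two
    (by linarith [ENNReal.toReal_inv_add_lt hq0 (by simpa only [one_div] using hpq)])
  set s := q.toReal⁻¹ + 1 - p.toReal⁻¹ - t
  set K := ENNReal.ofReal c₁ ^ s + ENNReal.ofReal c₂ ^ s
  have hK0 : K ≠ 0 :=
    ne_bot_of_le_ne_bot (ENNReal.rpow_pos (ofReal_pos.mpr hc₁) ofReal_ne_top).ne' le_self_add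
  have hK : K ≠ ⊤ := add_ne_top.mpr ⟨rpow_ne_top_of_ne_zero (ofReal_pos.mpr hc₁).ne' ofReal_ne_top,
    rpow_ne_top_of_ne_zero (ofReal_pos.mpr hc₂).ne' ofReal_ne_top⟩
  have hC : K * (1 - ρ)⁻¹ ≠ ⊤ := mul_ne_top hK (inv_ne_top.mpr (tsub_pos_of_lt hρ).ne')
  have hC0 : K * (1 - ρ)⁻¹ ≠ 0 := mul_ne_zero hK0 (ENNReal.inv_ne_zero.mpr (sub_ne_top one_ne_top))
  refine ⟨(K * (1 - ρ)⁻¹).toReal, toReal_pos hC0 hC, fun f hf => ?_⟩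
  have hQD : ∀ j i, Q j i ⊆ D := fun j i =>
    ((Set.subset_iUnion _ i).trans (hunion j).subset).trans fun _ hz => hz.2
  rw [ofReal_toReal hC]
  calc _ = eLpNorm (fun z => ∑' j, hypersingularLayer (volume.restrict D) (Q j) t f z) q
          (volume.restrict D) := by
        simp only [hypersingularLayer_restrict_of_subset (hQD _)]
        rfl
    _ ≤ _ := eLpNorm_tsum_le_of_le_geometric hq
        (fun j => (measurable_hypersingularLayer (hmeas j) t f).aestronglyMeasurable) fun j =>
          eLpNorm_hypersingularLayer_le_geometric (hmeas j) (hdisj j) hc₁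
            (fun i => by simpa only [Measure.restrict_eq_self _ (hQD j i)] using hvol j i)
            hp hq0 hqp.ne_top hqp.le t hf.1

/-- strong `L^p(𝔻) → L^q(𝔻)` boundedness of the full hypersingular
dyadic operator `T = ∑_j A_j` on the unit disc in the off-critical regime
`1/q - 1/p > 2t - 2`, where `A_j` sums over the generation-`j` Carleson boxes. -/
theorem stmt_19 (t : ℝ) (ht1 : 1 < t) (ht2 : t < 3/2)
    (c₁ c₂ : ℝ) (hc₁ : 0 < c₁) (hc₂ : 0 < c₂)
    (p q : ℝ≥0∞) (hp : 1 ≤ p) (hq : 1 ≤ q)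
    (hpq : 1 / p + ENNReal.ofReal (2 * t - 2) < 1 / q)
    (Q : (j : ℕ) → Fin (2 ^ j) → Set ℂ)
    (hmeas : ∀ (j : ℕ) (i : Fin (2 ^ j)), MeasurableSet (Q j i))
    (hdisj : ∀ j, Pairwise fun i i' => Disjoint (Q j i) (Q j i'))
    (hvol : ∀ (j : ℕ) (i : Fin (2 ^ j)), ENNReal.ofReal (c₁ * 2 ^ (-2 * (j : ℝ))) ≤ volume (Q j i) ∧
      volume (Q j i) ≤ ENNReal.ofReal (c₂ * 2 ^ (-2 * (j : ℝ))))
    (hunion : ∀ j, (⋃ i, Q j i) = {z : ℂ | 1 - 2 ^ (-(j : ℝ)) ≤ ‖z‖ ∧ ‖z‖ < 1}) :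
    ∃ C > 0, ∀ f : ℂ → ℝ,
      MemLp f p (volume.restrict {z : ℂ | ‖z‖ < 1}) →
      eLpNorm
          (fun z => ∑' j : ℕ, ∑ i : Fin (2 ^ j),
            Set.indicator (Q j i)
              (fun _ => (volume (Q j i)).toReal ^ (-t) * ∫ w in Q j i, |f w|) z)
          q (volume.restrict {z : ℂ | ‖z‖ < 1})
        ≤ ENNReal.ofReal C * eLpNorm f p (volume.restrict {z : ℂ | ‖z‖ < 1}) :=
  stmt_19_general t c₁ c₂ hc₁ hc₂ p q hp hq hpq Q hmeas hdisj hvol hunion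
end
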